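/- arXiv:0906.4642 — 2 statements merged into one kernel-verified Lean document; each statement's English description precedes it below -/
import Mathlib

section
/- Under Assumption (*) with S nonconstant, let φ̂ = (φ̂_1,…,φ̂_k) ∈ {0,π}^k be a maximal point of (φ_1,…,φ_k) ↦ |S(e^{iφ_1},…,e^{iφ_k})|, and let u = (u_1,…,u_k) ∈ L. Then for all (φ_1,…,φ_k) ∈ ℝ^k: det_{1≤j,m≤k}( sin(u_m(φ̂_j + φ_j)) ) = (−1)^{(∑_{j=1}^k u_j φ̂_j)/π} · det_{1≤j,m≤k}( sin(u_m φ_j) ). -/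
open scoped BigOperators
open Classical

noncomputable section

/-- Reflection in the hyperplane `x_i - x_j = 0`: swaps coordinates `i` and `j`. -/
def swapCoord {k : ℕ} (i j : Fin k) : Equiv.Perm (Fin k → ℤ) :=
  Equiv.arrowCongr (Equiv.swap i j) (Equiv.refl ℤ)

/-- Reflection in the hyperplane `x_i = 0`: negates the `i`-th coordinate. -/
def negCoord {k : ℕ} (i : Fin k) : Equiv.Perm (Fin k → ℤ) :=
  Equiv.piCongrRight fun j => if j = i then Equiv.neg ℤ else Equiv.refl ℤ

/-- The reflection group of type `B_k`, generated by the reflections in the hyperplanes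
`x_i - x_j = 0` (`i < j`) and `x_1 = 0`. -/
def BkGroup (k : ℕ) : Subgroup (Equiv.Perm (Fin k → ℤ)) :=
  Subgroup.closure
    ({g | ∃ i j : Fin k, i < j ∧ g = swapCoord i j} ∪
      {g | ∃ h : 0 < k, g = negCoord ⟨0, h⟩})

/-- The Grabiner–Magyar atomic step set `{±e⁽¹⁾, …, ±e⁽ᵏ⁾}`. -/
def stepsGM1 (k : ℕ) : Set (Fin k → ℤ) :=
  {a | ∃ i : Fin k, a = Pi.single i 1 ∨ a = -Pi.single i 1}

/-- The Grabiner–Magyar atomic step set `{ε₁e⁽¹⁾+⋯+εₖe⁽ᵏ⁾ : εⱼ ∈ {±1}}`. -/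
def stepsGM2 (k : ℕ) : Set (Fin k → ℤ) :=
  {a | ∀ j, a j = 1 ∨ a j = -1}

/-- The open Weyl chamber `0 < x₁ < ⋯ < x_k`. -/
def chamberOpen (k : ℕ) : Set (Fin k → ℤ) :=
  {x | StrictMono x ∧ ∀ j, 0 < x j}

/-- Assumption (*): `A` is one of the two Grabiner–Magyar step sets, `S` is a composite
step set over `A` closed under reflecting initial segments, and the (positive) weight `w`
is invariant under reflecting initial segments. -/
def AssumptionStar {k : ℕ} (A : Finset (Fin k → ℤ)) (S : Finset (List (Fin k → ℤ)))
    (w : List (Fin k → ℤ) → ℝ) : Prop :=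
  ((A : Set (Fin k → ℤ)) = stepsGM1 k ∨ (A : Set (Fin k → ℤ)) = stepsGM2 k) ∧
    (∀ s ∈ S, ∀ a ∈ s, a ∈ A) ∧ (∀ s ∈ S, 0 < w s) ∧
    ∀ s ∈ S, ∀ g ∈ BkGroup k, ∀ m ≤ s.length,
      ((s.take m).map (⇑g) ++ s.drop m) ∈ S ∧
        w ((s.take m).map (⇑g) ++ s.drop m) = w s

/-- The sequence of atomic steps of a walk with composite steps `f 0, f 1, …`. -/
def walkAtoms {k : ℕ} {S : Finset (List (Fin k → ℤ))} {n : ℕ}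
    (f : Fin n → {s // s ∈ S}) : List (Fin k → ℤ) :=
  (List.ofFn fun j => (f j : List (Fin k → ℤ))).flatten

/-- Generating function (weighted count) of `n`-step walks from `u` to `v`. -/
def Pn {k : ℕ} (S : Finset (List (Fin k → ℤ))) (w : List (Fin k → ℤ) → ℝ)
    (n : ℕ) (u v : Fin k → ℤ) : ℝ :=
  ∑ f : Fin n → {s // s ∈ S},
    if u + ∑ j, (f j : List (Fin k → ℤ)).sum = v then ∏ j, w (f j) else 0

/-- Generating function (weighted count) of `n`-step walks from `u` to `v`, all of whose
intermediate positions (after every atomic step) stay in the open chamber. -/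
def PnPlus {k : ℕ} (S : Finset (List (Fin k → ℤ))) (w : List (Fin k → ℤ) → ℝ)
    (n : ℕ) (u v : Fin k → ℤ) : ℝ :=
  ∑ f : Fin n → {s // s ∈ S},
    if (u + ∑ j, (f j : List (Fin k → ℤ)).sum = v) ∧
        ∀ m : ℕ, u + ((walkAtoms f).take m).sum ∈ chamberOpen k
      then ∏ j, w (f j) else 0

/-- The composite step generating function `S(z₁,…,z_k)`. -/
def compGF {k : ℕ} (S : Finset (List (Fin k → ℤ))) (w : List (Fin k → ℤ) → ℝ)
    (z : Fin k → ℂ) : ℂ :=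
  ∑ s ∈ S, (w s : ℂ) * ∏ j, z j ^ s.sum j

/-- The composite step generating function, as a function of real variables. -/
def compGFR {k : ℕ} (S : Finset (List (Fin k → ℤ))) (w : List (Fin k → ℤ) → ℝ)
    (x : Fin k → ℝ) : ℝ :=
  ∑ s ∈ S, w s * ∏ j, x j ^ s.sum j

/-- The set of maximal points of `(φ₁,…,φ_k) ↦ |S(e^{iφ₁},…,e^{iφ_k})|` in `[0,2π)^k`. -/
def maximalPoints {k : ℕ} (S : Finset (List (Fin k → ℤ))) (w : List (Fin k → ℤ) → ℝ) :
    Set (Fin k → ℝ) :=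
  {φ | (∀ j, φ j ∈ Set.Ico (0 : ℝ) (2 * Real.pi)) ∧
    ∀ ψ : Fin k → ℝ,
      ‖compGF S w fun j => Complex.exp (Complex.I * ψ j)‖ ≤
        ‖compGF S w fun j => Complex.exp (Complex.I * φ j)‖}


/-!
Write `φ̂ⱼ = εⱼ π` with `εⱼ ∈ ℤ`. Then `sin (uₘ (φ̂ⱼ + φⱼ)) = (-1)^(uₘ εⱼ) sin (uₘ φⱼ)`, and the
sign `(-1)^(uₘ εⱼ)` depends only on the column `m` when all `εⱼ` have the same parity, and only on
the row `j` when all `uₘ` do; either way the determinant picks up `(-1)^(∑ uₘ εₘ) = (-1)^e`.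

For the step set `{±1}^k` every vector of `L` has coordinates of one parity. For the step set
`{±e_i}`, `S(e^{iφ̂}) = ∑_s w(s) (-1)^⟨ε, s⟩` while `S(1, …, 1) = ∑_s w(s)`, so maximality forces
all composite steps to carry the same sign `(-1)^⟨ε, s⟩`. Reflecting the first atomic step
`±e_i` of a composite step to `±e_p` and to `±e_q` changes that sign by `(-1)^(ε_p - ε_q)`, so
all `εⱼ` have the same parity.
-/

section NegOneZPow

variable {α : Type*} [DivisionMonoid α] [HasDistribNeg α] {a b : ℤ}

theorem neg_one_zpow_eq_of_even_sub (h : Even (a - b)) : (-1 : α) ^ a = (-1 : α) ^ b := by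
  simp only [neg_one_zpow_eq_ite, Int.even_sub.mp h]

theorem neg_one_zpow_eq_neg_one_zpow_iff (h : (-1 : α) ≠ 1) :
    (-1 : α) ^ a = (-1 : α) ^ b ↔ Even (a - b) := by
  refine ⟨fun hab => ?_, neg_one_zpow_eq_of_even_sub⟩
  rw [neg_one_zpow_eq_ite, neg_one_zpow_eq_ite] at hab
  rw [Int.even_sub]
  split_ifs at hab with ha hb hb
  exacts [iff_of_true ha hb, (h hab.symm).elim, (h hab).elim, iff_of_false ha hb]

end NegOneZPow

theorem Finset.prod_zpow_eq_zpow_sum₀ {G : Type*} [CommGroupWithZero G] {ι : Type*}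
    (s : Finset ι) (f : ι → ℤ) {a : G} (ha : a ≠ 0) :
    ∏ i ∈ s, a ^ f i = a ^ ∑ i ∈ s, f i := by
  induction s using Finset.cons_induction with
  | empty => simp
  | cons i s hi ih => rw [prod_cons, sum_cons, ih, zpow_add₀ ha]

section SignedMatrix

open Matrix

variable {n R : Type*} [Fintype n] [DecidableEq n] [Field R]

theorem det_of_neg_one_zpow_mul_of_even_sub_left (u ε : n → ℤ) (M : Matrix n n R)
    (hε : ∀ j j', Even (ε j - ε j')) :
    det (of fun j m => (-1 : R) ^ (u m * ε j) * M j m) =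
      (-1 : R) ^ (∑ m, u m * ε m) * det M := by
  rcases isEmpty_or_nonempty n with hn | ⟨⟨j₀⟩⟩
  · simp
  have hrow : ∀ j m, (-1 : R) ^ (u m * ε j) = (-1 : R) ^ (u m * ε j₀) := fun j m =>
    neg_one_zpow_eq_of_even_sub (by rw [← mul_sub]; exact (hε j j₀).mul_left _)
  simp_rw [hrow]
  rw [det_mul_row, Finset.prod_zpow_eq_zpow_sum₀ _ _ (neg_ne_zero.mpr one_ne_zero : (-1 : R) ≠ 0)]
  congr 1
  refine neg_one_zpow_eq_of_even_sub ?_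
  rw [← Finset.sum_sub_distrib]
  exact Finset.even_sum _ fun m _ => by rw [← mul_sub]; exact (hε j₀ m).mul_left _

theorem det_of_neg_one_zpow_mul (u ε : n → ℤ) (M : Matrix n n R)
    (h : (∀ j j', Even (ε j - ε j')) ∨ ∀ m m', Even (u m - u m')) :
    det (of fun j m => (-1 : R) ^ (u m * ε j) * M j m) =
      (-1 : R) ^ (∑ m, u m * ε m) * det M := by
  rcases h with hε | hu
  · exact det_of_neg_one_zpow_mul_of_even_sub_left u ε M hε
  · rw [← det_transpose, ← det_transpose M]
    simp_rw [mul_comm (u _) (ε _)]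
    exact det_of_neg_one_zpow_mul_of_even_sub_left ε u Mᵀ hu

end SignedMatrix

theorem swapCoord_single {k : ℕ} (i j : Fin k) (n : ℤ) :
    swapCoord i j (Pi.single i n) = Pi.single j n := by
  funext m
  simp [swapCoord, Pi.single_apply, Equiv.swap_apply_eq_iff]

theorem swapCoord_mem_BkGroup {k : ℕ} (i j : Fin k) : swapCoord i j ∈ BkGroup k := by
  rcases lt_trichotomy i j with h | rfl | h
  · exact Subgroup.subset_closure (Or.inl ⟨i, j, h, rfl⟩)
  · have : swapCoord i i = 1 := by ext; simp [swapCoord]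
    exact this ▸ one_mem _
  · have : swapCoord i j = swapCoord j i := by rw [swapCoord, swapCoord, Equiv.swap_comm]
    exact this ▸ Subgroup.subset_closure (Or.inl ⟨j, i, h, rfl⟩)

theorem even_sub_of_mem_span_stepsGM2 {k : ℕ} {u : Fin k → ℤ}
    (hu : u ∈ Submodule.span ℤ (stepsGM2 k)) (i j : Fin k) : Even (u i - u j) := by
  induction hu using Submodule.span_induction with
  | mem x hx => rcases hx i with h | h <;> rcases hx j with h' | h' <;> rw [h, h'] <;> decide
  | zero => simp
  | add x y _ _ hx hy =>
    simpa only [Pi.add_apply, add_sub_add_comm] using hx.add hy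
  | smul c x _ hx =>
    simpa only [Pi.smul_apply, smul_eq_mul, ← mul_sub] using hx.mul_left c

theorem compGF_exp_int_mul_pi {k : ℕ} (S : Finset (List (Fin k → ℤ)))
    (w : List (Fin k → ℤ) → ℝ) (ε : Fin k → ℤ) :
    compGF S w (fun j => Complex.exp (Complex.I * ((ε j * Real.pi : ℝ) : ℂ))) =
      ((∑ s ∈ S, w s * (-1 : ℝ) ^ ∑ j, ε j * s.sum j : ℝ) : ℂ) := by
  have hexp : ∀ j, Complex.exp (Complex.I * ((ε j * Real.pi : ℝ) : ℂ)) = (-1) ^ ε j := by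
    intro j
    rw [← Complex.exp_pi_mul_I, ← Complex.exp_int_mul]
    push_cast
    ring_nf
  simp only [compGF, hexp, ← zpow_mul]
  push_cast
  simp only [Finset.prod_zpow_eq_zpow_sum₀ _ _ (neg_ne_zero.mpr one_ne_zero : (-1 : ℂ) ≠ 0)]

theorem even_sub_of_sum_le_abs_sum_mul_neg_one_zpow {ι : Type*} {s : Finset ι} {w : ι → ℝ}
    {n : ι → ℤ} (hw : ∀ i ∈ s, 0 < w i)
    (h : ∑ i ∈ s, w i ≤ |∑ i ∈ s, w i * (-1) ^ n i|) {i j : ι} (hi : i ∈ s) (hj : j ∈ s) :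
    Even (n i - n j) := by
  set T := ∑ i ∈ s, w i * (-1) ^ n i
  have habs : ∀ i, |(-1 : ℝ) ^ n i| = 1 := fun i => by simp
  have hT : |T| = ∑ i ∈ s, w i := by
    refine le_antisymm ((Finset.abs_sum_le_sum_abs _ _).trans_eq ?_) h
    exact Finset.sum_congr rfl fun i hi => by rw [abs_mul, habs, mul_one, abs_of_pos (hw i hi)]
  obtain ⟨c, hc, hcT⟩ : ∃ c : ℝ, |c| = 1 ∧ c * T = ∑ i ∈ s, w i := by
    rcases abs_choice T with hT' | hT'
    · exact ⟨1, by simp, by rw [one_mul, ← hT', hT]⟩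
    · exact ⟨-1, by simp, by rw [neg_one_mul, ← hT', hT]⟩
  have hzero : ∑ i ∈ s, w i * (1 - c * (-1) ^ n i) = 0 := by
    simp only [mul_sub, mul_one, Finset.sum_sub_distrib, mul_left_comm _ c, ← Finset.mul_sum]
    rw [hcT, sub_self]
  have hnonneg : ∀ i ∈ s, 0 ≤ w i * (1 - c * (-1) ^ n i) := by
    refine fun i hi => mul_nonneg (hw i hi).le (sub_nonneg.mpr ?_)
    calc c * (-1) ^ n i ≤ |c * (-1) ^ n i| := le_abs_self _
      _ = 1 := by rw [abs_mul, hc, habs, one_mul]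
  have hsign : ∀ i ∈ s, c * (-1 : ℝ) ^ n i = 1 := fun i hi => by
    rcases mul_eq_zero.mp ((Finset.sum_eq_zero_iff_of_nonneg hnonneg).mp hzero i hi) with hw0 | hc1
    exacts [absurd hw0 (hw i hi).ne', (sub_eq_zero.mp hc1).symm]
  have hc0 : c ≠ 0 := by rintro rfl; simp at hc
  rw [← neg_one_zpow_eq_neg_one_zpow_iff (α := ℝ) (by norm_num)]
  exact mul_left_cancel₀ hc0 ((hsign i hi).trans (hsign j hj).symm)

theorem exists_cons_mem_of_compGF_ne {k : ℕ} {S : Finset (List (Fin k → ℤ))}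
    {w : List (Fin k → ℤ) → ℝ} {z z' : Fin k → ℂ} (h : compGF S w z ≠ compGF S w z') :
    ∃ a t, a :: t ∈ S := by
  by_contra! hnil
  refine h (Finset.sum_congr rfl fun s hs => ?_)
  cases s with
  | nil => simp
  | cons a t => exact absurd hs (hnil a t)

section MaximalPoint

variable {k : ℕ} {S : Finset (List (Fin k → ℤ))} {w : List (Fin k → ℤ) → ℝ} {ε : Fin k → ℤ}

theorem even_sub_of_isMaximal_of_single_cons_mem (hw : ∀ s ∈ S, 0 < w s)
    (hcl : ∀ a t, a :: t ∈ S → ∀ g ∈ BkGroup k, g a :: t ∈ S)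
    {i : Fin k} {n : ℤ} (hn : Odd n) {t : List (Fin k → ℤ)} (hs : Pi.single i n :: t ∈ S)
    (hmax : ∀ ψ : Fin k → ℝ, ‖compGF S w fun j => Complex.exp (Complex.I * ψ j)‖ ≤
      ‖compGF S w fun j => Complex.exp (Complex.I * ((ε j * Real.pi : ℝ) : ℂ))‖)
    (p q : Fin k) : Even (ε p - ε q) := by
  have hsigns : ∀ s ∈ S, ∀ s' ∈ S, Even (∑ j, ε j * s.sum j - ∑ j, ε j * s'.sum j) := by
    have h := hmax fun j => ((0 : Fin k → ℤ) j : ℝ) * Real.pi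
    rw [compGF_exp_int_mul_pi, compGF_exp_int_mul_pi, Complex.norm_real, Complex.norm_real,
      Real.norm_eq_abs, Real.norm_eq_abs] at h
    simp only [Pi.zero_apply, zero_mul, Finset.sum_const_zero, zpow_zero, mul_one] at h
    exact fun s hs s' hs' => even_sub_of_sum_le_abs_sum_mul_neg_one_zpow hw
      ((le_abs_self _).trans h) hs hs'
  have hsum : ∀ r, ∑ j, ε j * (Pi.single r n :: t).sum j = ε r * n + ∑ j, ε j * t.sum j := by
    intro r
    simp [List.sum_cons, mul_add, Finset.sum_add_distrib, Pi.single_apply]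
  have hpq := hsigns _ (swapCoord_single i p n ▸ hcl _ _ hs _ (swapCoord_mem_BkGroup i p))
    _ (swapCoord_single i q n ▸ hcl _ _ hs _ (swapCoord_mem_BkGroup i q))
  rw [hsum, hsum, add_sub_add_right_eq_sub, ← sub_mul] at hpq
  exact (Int.even_mul.mp hpq).resolve_right (Int.not_even_iff_odd.mpr hn)

theorem even_sub_of_isMaximal_of_stepsGM1 {A : Finset (Fin k → ℤ)}
    (hstar : AssumptionStar A S w) (hA : (A : Set (Fin k → ℤ)) = stepsGM1 k)
    {z z' : Fin k → ℂ} (hz : compGF S w z ≠ compGF S w z')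
    (hmax : ∀ ψ : Fin k → ℝ, ‖compGF S w fun j => Complex.exp (Complex.I * ψ j)‖ ≤
      ‖compGF S w fun j => Complex.exp (Complex.I * ((ε j * Real.pi : ℝ) : ℂ))‖)
    (p q : Fin k) : Even (ε p - ε q) := by
  obtain ⟨-, hSA, hw, hcl⟩ := hstar
  have hcl₁ : ∀ a t, a :: t ∈ S → ∀ g ∈ BkGroup k, g a :: t ∈ S := fun a t hs g hg => by
    simpa using (hcl _ hs g hg 1 (by simp)).1
  obtain ⟨a, t, hs⟩ := exists_cons_mem_of_compGF_ne hz
  have ha : a ∈ (A : Set (Fin k → ℤ)) := hSA _ hs a List.mem_cons_self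
  rw [hA] at ha
  obtain ⟨i, rfl | rfl⟩ := ha
  · exact even_sub_of_isMaximal_of_single_cons_mem hw hcl₁ odd_one hs hmax p q
  · rw [← Pi.single_neg] at hs
    exact even_sub_of_isMaximal_of_single_cons_mem hw hcl₁ odd_neg_one hs hmax p q

end MaximalPoint

theorem Real.sin_intCast_mul_add_int_mul_pi (u n : ℤ) (φ : ℝ) :
    Real.sin (u * (n * Real.pi + φ)) = (-1) ^ (u * n) * Real.sin (u * φ) := by
  rw [← Real.sin_add_int_mul_pi]
  push_cast
  ring_nf

theorem sine_det_identity_at_maximal_point_general {k : ℕ}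
    (A : Finset (Fin k → ℤ)) (S : Finset (List (Fin k → ℤ))) (w : List (Fin k → ℤ) → ℝ)
    (hstar : AssumptionStar A S w)
    (hnonconst : ∃ z z' : Fin k → ℂ, (∀ j, z j ≠ 0) ∧ (∀ j, z' j ≠ 0) ∧
      compGF S w z ≠ compGF S w z')
    (φhat : Fin k → ℝ)
    (hφhat : ∀ j, φhat j = 0 ∨ φhat j = Real.pi)
    (hmax : φhat ∈ maximalPoints S w)
    (u : Fin k → ℤ) (huL : u ∈ Submodule.span ℤ (A : Set (Fin k → ℤ)))
    (e : ℤ) (he : (e : ℝ) * Real.pi = ∑ j, (u j : ℝ) * φhat j) :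
    ∀ φ : Fin k → ℝ,
      Matrix.det (Matrix.of fun j m : Fin k =>
          Real.sin ((u m : ℝ) * (φhat j + φ j))) =
        (-1 : ℝ) ^ e *
          Matrix.det (Matrix.of fun j m : Fin k => Real.sin ((u m : ℝ) * φ j)) := by
  have hφε : ∀ j, ∃ n : ℤ, φhat j = n * Real.pi := fun j =>
    (hφhat j).elim (fun h => ⟨0, by simp [h]⟩) (fun h => ⟨1, by simp [h]⟩)
  choose ε hε using hφε
  obtain rfl : φhat = fun j => (ε j : ℝ) * Real.pi := funext hε
  have he' : e = ∑ j, u j * ε j := by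
    refine Int.cast_injective (α := ℝ) (mul_right_cancel₀ Real.pi_ne_zero ?_)
    rw [he]
    push_cast
    simp only [Finset.sum_mul, mul_assoc]
  have hparity : (∀ j j', Even (ε j - ε j')) ∨ ∀ m m', Even (u m - u m') := by
    obtain ⟨z, z', -, -, hz⟩ := hnonconst
    rcases hstar.1 with hA | hA
    · exact .inl (even_sub_of_isMaximal_of_stepsGM1 hstar hA hz hmax.2)
    · exact .inr (even_sub_of_mem_span_stepsGM2 (hA ▸ huL))
  intro φ
  simp_rw [Real.sin_intCast_mul_add_int_mul_pi, he']
  exact det_of_neg_one_zpow_mul u ε (Matrix.of fun j m => Real.sin (u m * φ j)) hparity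

/-- Lemma `lem:step_gen_fun_det_identity`: the sine determinant
identity at a maximal point `φ̂ ∈ {0,π}^k`. The integer `e` is
`(∑ⱼ uⱼ φ̂ⱼ)/π`. -/
theorem sine_det_identity_at_maximal_point {k : ℕ} (hk : 0 < k)
    (A : Finset (Fin k → ℤ)) (S : Finset (List (Fin k → ℤ))) (w : List (Fin k → ℤ) → ℝ)
    (hstar : AssumptionStar A S w)
    (hnonconst : ∃ z z' : Fin k → ℂ, (∀ j, z j ≠ 0) ∧ (∀ j, z' j ≠ 0) ∧
      compGF S w z ≠ compGF S w z')
    (φhat : Fin k → ℝ)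
    (hφhat : ∀ j, φhat j = 0 ∨ φhat j = Real.pi)
    (hmax : φhat ∈ maximalPoints S w)
    (u : Fin k → ℤ) (huL : u ∈ Submodule.span ℤ (A : Set (Fin k → ℤ)))
    (e : ℤ) (he : (e : ℝ) * Real.pi = ∑ j, (u j : ℝ) * φhat j) :
    ∀ φ : Fin k → ℝ,
      Matrix.det (Matrix.of fun j m : Fin k =>
          Real.sin ((u m : ℝ) * (φhat j + φ j))) =
        (-1 : ℝ) ^ e *
          Matrix.det (Matrix.of fun j m : Fin k => Real.sin ((u m : ℝ) * φ j)) :=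
  sine_det_identity_at_maximal_point_general A S w hstar hnonconst φhat hφhat hmax u huL e he
end
end

section
/- (Determinant factorisation, block version.) Let R_1* > 0, let 0 ≤ a ≤ k, and let f_1,…,f_k, g_1,…,g_k : ℂ → ℂ be analytic on {x ∈ ℂ : |x| < R_1*}. Let x_1,…,x_k ∈ ℂ and R satisfy max_j |x_j| < R < R_1*. Then det(M) = (∏_{1≤j<m≤a}(x_m − x_j)) · (∏_{a<j<m≤k}(x_m − x_j)) · det(N), where M is the k×k matrix with entries M_{j,m} = f_m(x_j) for j ≤ a and M_{j,m} = g_m(x_j) for j > a, and N is the k×k matrix with entries N_{j,m} = (2πi)^{−1} ∮_{|ξ|=R} f_m(ξ)/∏_{ℓ=1}^{j}(ξ − x_ℓ) dξ for j ≤ a and N_{j,m} = (2πi)^{−1} ∮_{|ξ|=R} g_m(ξ)/∏_{ℓ=a+1}^{j}(ξ − x_ℓ) dξ for j > a, the contour being the positively oriented circle of radius R about the origin. -/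
/-!
Newton's expansion of the Cauchy kernel,
`1/(ξ - x_j) = ∑_{i ≤ j} ∏_{ℓ < i} (x_j - x_ℓ) / ∏_{ℓ ≤ i} (ξ - x_ℓ)`,
integrated against `F` over the circle, gives Newton's interpolation formula
`F(x_j) = ∑_{i ≤ j} ∏_{ℓ < i} (x_j - x_ℓ) · F[x_1, …, x_i]`, where the divided difference
`F[x_1, …, x_i]` is Hermite's contour integral. Doing this within each block of rows writes the
matrix of values as `U * N`, where `N` is the matrix of contour integrals and `U` is lower
triangular with diagonal entries `∏_{ℓ < j, same block} (x_j - x_ℓ)`. Taking determinants gives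
the factorisation, with no assumption that the points are distinct.
-/

open Finset

theorem inv_sub_eq_newton_sum_add {ι K : Type*} [LinearOrder ι] [Field K] (s : Finset ι)
    (v : ι → K) {ξ y : K} (hy : ξ ≠ y) (hv : ∀ ℓ ∈ s, ξ ≠ v ℓ) :
    (ξ - y)⁻¹ = ∑ i ∈ s, (∏ ℓ ∈ s with ℓ < i, (y - v ℓ)) / ∏ ℓ ∈ s with ℓ ≤ i, (ξ - v ℓ) +
      (∏ ℓ ∈ s, (y - v ℓ)) / ((ξ - y) * ∏ ℓ ∈ s, (ξ - v ℓ)) := by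
  induction s using Finset.induction_on_max with
  | empty => simp
  | insert m s hm ih =>
    have hms : m ∉ s := fun h => lt_irrefl m (hm m h)
    have hvm : ξ - v m ≠ 0 := sub_ne_zero.mpr (hv m (mem_insert_self m s))
    have hvs : ∏ ℓ ∈ s, (ξ - v ℓ) ≠ 0 :=
      prod_ne_zero_iff.mpr fun ℓ hℓ => sub_ne_zero.mpr (hv ℓ (mem_insert_of_mem hℓ))
    have hbelow : ∀ i ∈ s, ({ℓ ∈ insert m s | ℓ < i} = {ℓ ∈ s | ℓ < i}) ∧
        {ℓ ∈ insert m s | ℓ ≤ i} = {ℓ ∈ s | ℓ ≤ i} := fun i hi => by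
      simp [filter_insert, (hm i hi).not_gt, (hm i hi).not_ge]
    have hlt_m : {ℓ ∈ insert m s | ℓ < m} = s := by
      rw [filter_insert, if_neg (lt_irrefl m), filter_true_of_mem hm]
    have hle_m : {ℓ ∈ insert m s | ℓ ≤ m} = insert m s := by
      rw [filter_insert, if_pos le_rfl, filter_true_of_mem fun ℓ hℓ => (hm ℓ hℓ).le]
    rw [sum_insert hms, sum_congr rfl fun i hi => by rw [(hbelow i hi).1, (hbelow i hi).2],
      ih fun ℓ hℓ => hv ℓ (mem_insert_of_mem hℓ), hlt_m, hle_m, prod_insert hms, prod_insert hms]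
    have hξy : ξ - y ≠ 0 := sub_ne_zero.mpr hy
    -- `ξ - v m = (ξ - y) + (y - v m)` splits the old remainder into the new term and remainder.
    field_simp
    ring

theorem inv_sub_eq_newton_sum {ι K : Type*} [LinearOrder ι] [Field K] {s : Finset ι}
    (v : ι → K) {ξ : K} {j : ι} (hj : j ∈ s) (hv : ∀ ℓ ∈ s, ξ ≠ v ℓ) :
    (ξ - v j)⁻¹ = ∑ i ∈ s, (∏ ℓ ∈ s with ℓ < i, (v j - v ℓ)) / ∏ ℓ ∈ s with ℓ ≤ i, (ξ - v ℓ) := by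
  rw [inv_sub_eq_newton_sum_add s v (hv j hj) hv, prod_eq_zero hj (sub_self _), zero_div,
    add_zero]

open Complex Metric Real

/-- Hermite's contour integral for the divided difference of `F` at the points `v ℓ`, `ℓ ∈ s`. -/
noncomputable def cauchyDividedDiff {ι : Type*} (c : ℂ) (R : ℝ) (F : ℂ → ℂ) (v : ι → ℂ)
    (s : Finset ι) : ℂ :=
  (2 * π * I)⁻¹ * ∮ ξ in C(c, R), F ξ / ∏ ℓ ∈ s, (ξ - v ℓ)

theorem eq_sum_mul_cauchyDividedDiff {ι : Type*} [LinearOrder ι] {c : ℂ} {R : ℝ} {F : ℂ → ℂ}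
    (hF : DifferentiableOn ℂ F (closedBall c R)) {s : Finset ι} {v : ι → ℂ}
    (hv : ∀ ℓ ∈ s, v ℓ ∈ ball c R) {j : ι} (hj : j ∈ s) :
    F (v j) = ∑ i ∈ s, (∏ ℓ ∈ s with ℓ < i, (v j - v ℓ)) *
      cauchyDividedDiff c R F v {ℓ ∈ s | ℓ ≤ i} := by
  have hR : 0 ≤ R := (dist_nonneg.trans_lt (hv j hj)).le
  have hne : ∀ ξ ∈ sphere c R, ∀ ℓ ∈ s, ξ ≠ v ℓ := fun ξ hξ ℓ hℓ h =>
    Set.disjoint_left.mp sphere_disjoint_ball hξ (h ▸ hv ℓ hℓ)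
  have hcont : ∀ t ⊆ s, ContinuousOn (fun ξ => F ξ / ∏ ℓ ∈ t, (ξ - v ℓ)) (sphere c R) :=
    fun t ht => (hF.continuousOn.mono sphere_subset_closedBall).div (by fun_prop) fun ξ hξ =>
        prod_ne_zero_iff.mpr fun ℓ hℓ => sub_ne_zero.mpr (hne ξ hξ ℓ (ht hℓ))
  calc F (v j) = (2 * π * I)⁻¹ * ∮ ξ in C(c, R), (ξ - v j)⁻¹ * F ξ := by
        have hCauchy := hF.circleIntegral_sub_inv_smul (hv j hj)
        simp only [smul_eq_mul] at hCauchy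
        rw [hCauchy, inv_mul_cancel_left₀ two_pi_I_ne_zero]
    _ = (2 * π * I)⁻¹ * ∮ ξ in C(c, R), ∑ i ∈ s, (∏ ℓ ∈ s with ℓ < i, (v j - v ℓ)) *
          (F ξ / ∏ ℓ ∈ s with ℓ ≤ i, (ξ - v ℓ)) := by
        congr 1
        refine circleIntegral.integral_congr hR fun ξ hξ => ?_
        rw [inv_sub_eq_newton_sum v hj (hne ξ hξ), sum_mul]
        exact sum_congr rfl fun i _ => by ring
    _ = _ := by
        rw [circleIntegral.integral_fun_sum, mul_sum]
        · refine sum_congr rfl fun i _ => ?_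
          rw [circleIntegral.integral_const_mul, cauchyDividedDiff]
          ring
        · exact fun i _ => ContinuousOn.circleIntegrable hR
            (continuousOn_const.mul (hcont _ (filter_subset _ s)))

section Blocks

variable {ι κ : Type*} [Fintype ι] [LinearOrder ι] [DecidableEq κ] (β : ι → κ)

def blockIic (j : ι) : Finset ι := {ℓ | β ℓ = β j ∧ ℓ ≤ j}

variable {β}

theorem mem_blockIic {j ℓ : ι} : ℓ ∈ blockIic β j ↔ β ℓ = β j ∧ ℓ ≤ j := by
  simp [blockIic]

variable (β) in
theorem self_mem_blockIic (j : ι) : j ∈ blockIic β j := mem_blockIic.mpr ⟨rfl, le_rfl⟩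

theorem filter_blockIic_le {i j : ι} (hi : i ∈ blockIic β j) :
    {ℓ ∈ blockIic β j | ℓ ≤ i} = blockIic β i := by
  obtain ⟨hβ, hij⟩ := mem_blockIic.mp hi
  ext ℓ
  simp only [mem_filter, mem_blockIic, hβ]
  exact ⟨fun h => ⟨h.1.1, h.2⟩, fun h => ⟨⟨h.1, h.2.trans hij⟩, h.2⟩⟩

variable (β) in
/-- Row `j` lists the Newton basis polynomials of the block of `j`, evaluated at `x j`. -/
def newtonMatrix (x : ι → ℂ) : Matrix ι ι ℂ :=
  Matrix.of fun j i => if i ∈ blockIic β j then ∏ ℓ ∈ blockIic β j with ℓ < i, (x j - x ℓ) else 0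

theorem det_newtonMatrix (x : ι → ℂ) :
    (newtonMatrix β x).det =
      ∏ p ∈ univ.filter (fun p : ι × ι => p.1 < p.2 ∧ β p.1 = β p.2), (x p.2 - x p.1) := by
  have hlower : (newtonMatrix β x).IsLowerTriangular := fun j i hji => by
    have : i ∉ blockIic β j := fun h => (mem_blockIic.mp h).2.not_gt hji
    simp [newtonMatrix, this]
  rw [Matrix.det_of_isLowerTriangular _ hlower, prod_filter, Fintype.prod_prod_type_right]
  refine prod_congr rfl fun j _ => ?_
  rw [newtonMatrix, Matrix.of_apply, if_pos (self_mem_blockIic β j)]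
  simp only [blockIic, filter_filter, prod_filter]
  refine prod_congr rfl fun ℓ _ => if_congr ?_ rfl rfl
  exact ⟨fun h => ⟨h.2, h.1.1⟩, fun h => ⟨⟨h.2, h.1.le⟩, h.1⟩⟩

variable {c : ℂ} {R : ℝ} {x : ι → ℂ}

theorem eval_matrix_eq_newtonMatrix_mul {n : Type*} {F : κ → n → ℂ → ℂ}
    (hF : ∀ b m, DifferentiableOn ℂ (F b m) (closedBall c R)) (hx : ∀ j, x j ∈ ball c R) :
    (Matrix.of fun j m => F (β j) m (x j) : Matrix ι n ℂ) = newtonMatrix β x *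
      Matrix.of fun j m => cauchyDividedDiff c R (F (β j) m) x (blockIic β j) := by
  ext j m
  simp only [Matrix.mul_apply, newtonMatrix, Matrix.of_apply, ite_mul, zero_mul, sum_ite_mem,
    univ_inter]
  rw [eq_sum_mul_cauchyDividedDiff (hF _ m) (fun ℓ _ => hx ℓ) (self_mem_blockIic β j)]
  refine sum_congr rfl fun i hi => ?_
  rw [filter_blockIic_le hi, (mem_blockIic.mp hi).1]

variable (β) in
theorem det_eval_eq_prod_mul_det_cauchyDividedDiff {F : κ → ι → ℂ → ℂ}
    (hF : ∀ b m, DifferentiableOn ℂ (F b m) (closedBall c R)) (hx : ∀ j, x j ∈ ball c R) :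
    (Matrix.of fun j m => F (β j) m (x j)).det =
      (∏ p ∈ univ.filter (fun p : ι × ι => p.1 < p.2 ∧ β p.1 = β p.2), (x p.2 - x p.1)) *
        (Matrix.of fun j m => cauchyDividedDiff c R (F (β j) m) x (blockIic β j)).det := by
  rw [eval_matrix_eq_newtonMatrix_mul hF hx, Matrix.det_mul, det_newtonMatrix]

end Blocks

theorem prod_pairs_same_side_eq_mul {M : Type*} [CommMonoid M] {k : ℕ} (a : ℕ)
    (h : Fin k × Fin k → M) :
    ∏ p ∈ univ.filter (fun p : Fin k × Fin k =>
        p.1 < p.2 ∧ decide ((p.1 : ℕ) < a) = decide ((p.2 : ℕ) < a)), h p =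
      (∏ p ∈ univ.filter (fun p : Fin k × Fin k => p.1 < p.2 ∧ (p.2 : ℕ) < a), h p) *
        ∏ p ∈ univ.filter (fun p : Fin k × Fin k => p.1 < p.2 ∧ a ≤ (p.1 : ℕ)), h p := by
  rw [← prod_filter_mul_prod_filter_not _ (fun p : Fin k × Fin k => (p.2 : ℕ) < a),
    filter_filter, filter_filter]
  congr 2 <;> ext p <;>
    simp only [mem_filter, mem_univ, true_and, decide_eq_decide, Fin.lt_def] <;> omega

theorem blockIic_decide_lt {k : ℕ} (a : ℕ) (j : Fin k) :
    blockIic (fun ℓ : Fin k => decide ((ℓ : ℕ) < a)) j =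
      if (j : ℕ) < a then univ.filter (· ≤ j) else univ.filter fun ℓ => a ≤ (ℓ : ℕ) ∧ ℓ ≤ j := by
  split_ifs <;> ext ℓ <;>
    simp only [mem_blockIic, mem_filter, mem_univ, true_and, decide_eq_decide, Fin.le_def] <;>
    omega

theorem det_factorisation_block_general {k : ℕ} (R1s : ℝ)
    (a : ℕ)
    (f g : Fin k → ℂ → ℂ)
    (hf : ∀ m, AnalyticOnNhd ℂ (f m) {x : ℂ | ‖x‖ < R1s})
    (hg : ∀ m, AnalyticOnNhd ℂ (g m) {x : ℂ | ‖x‖ < R1s})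
    (x : Fin k → ℂ) (R : ℝ)
    (hx : ∀ j, ‖x j‖ < R) (hR : R < R1s) :
    Matrix.det (Matrix.of fun j m : Fin k =>
        if (j : ℕ) < a then f m (x j) else g m (x j)) =
      (∏ p ∈ Finset.univ.filter
          (fun p : Fin k × Fin k => p.1 < p.2 ∧ (p.2 : ℕ) < a), (x p.2 - x p.1)) *
        (∏ p ∈ Finset.univ.filter
          (fun p : Fin k × Fin k => p.1 < p.2 ∧ a ≤ (p.1 : ℕ)), (x p.2 - x p.1)) *
        Matrix.det (Matrix.of fun j m : Fin k =>
          if (j : ℕ) < a then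
            (2 * (Real.pi : ℂ) * Complex.I)⁻¹ *
              ∮ ξ in C(0, R), f m ξ / ∏ ℓ ∈ Finset.univ.filter (· ≤ j), (ξ - x ℓ)
          else
            (2 * (Real.pi : ℂ) * Complex.I)⁻¹ *
              ∮ ξ in C(0, R), g m ξ /
                ∏ ℓ ∈ Finset.univ.filter (fun ℓ : Fin k => a ≤ (ℓ : ℕ) ∧ ℓ ≤ j),
                  (ξ - x ℓ)) := by
  have hball : closedBall (0 : ℂ) R ⊆ {z : ℂ | ‖z‖ < R1s} := fun z hz =>
    (mem_closedBall_zero_iff.mp hz).trans_lt hR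
  have hdiff : ∀ (b : Bool) m,
      DifferentiableOn ℂ (if b then f m else g m) (closedBall 0 R) := fun b m => by
    cases b
    · exact (hg m).differentiableOn.mono hball
    · exact (hf m).differentiableOn.mono hball
  have hfactor := det_eval_eq_prod_mul_det_cauchyDividedDiff (fun j : Fin k => decide ((j : ℕ) < a))
    hdiff fun j => mem_ball_zero_iff.mpr (hx j)
  rw [prod_pairs_same_side_eq_mul] at hfactor
  convert hfactor using 3 <;> ext j m <;> by_cases hj : (j : ℕ) < a <;>
    simp [hj, cauchyDividedDiff, blockIic_decide_lt]

/-- Lemma `lem:det_factorisation_2`: block version of the determinant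
factorisation: the first `a` rows use the functions `f m`, the remaining rows the
functions `g m`. (Rows are indexed `1,…,k`; row `j` corresponds to `(j : ℕ) < a` resp.
`a ≤ (j : ℕ)` for the 0-based index.) -/
theorem det_factorisation_block {k : ℕ} (hk : 0 < k) (R1s : ℝ) (hR1s : 0 < R1s)
    (a : ℕ) (ha : a ≤ k)
    (f g : Fin k → ℂ → ℂ)
    (hf : ∀ m, AnalyticOnNhd ℂ (f m) {x : ℂ | ‖x‖ < R1s})
    (hg : ∀ m, AnalyticOnNhd ℂ (g m) {x : ℂ | ‖x‖ < R1s})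
    (x : Fin k → ℂ) (R : ℝ)
    (hx : ∀ j, ‖x j‖ < R) (hR : R < R1s) :
    Matrix.det (Matrix.of fun j m : Fin k =>
        if (j : ℕ) < a then f m (x j) else g m (x j)) =
      (∏ p ∈ Finset.univ.filter
          (fun p : Fin k × Fin k => p.1 < p.2 ∧ (p.2 : ℕ) < a), (x p.2 - x p.1)) *
        (∏ p ∈ Finset.univ.filter
          (fun p : Fin k × Fin k => p.1 < p.2 ∧ a ≤ (p.1 : ℕ)), (x p.2 - x p.1)) *
        Matrix.det (Matrix.of fun j m : Fin k =>
          if (j : ℕ) < a then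
            (2 * (Real.pi : ℂ) * Complex.I)⁻¹ *
              ∮ ξ in C(0, R), f m ξ / ∏ ℓ ∈ Finset.univ.filter (· ≤ j), (ξ - x ℓ)
          else
            (2 * (Real.pi : ℂ) * Complex.I)⁻¹ *
              ∮ ξ in C(0, R), g m ξ /
                ∏ ℓ ∈ Finset.univ.filter (fun ℓ : Fin k => a ≤ (ℓ : ℕ) ∧ ℓ ≤ j),
                  (ξ - x ℓ)) :=
  det_factorisation_block_general R1s a f g hf hg x R hx hR
end
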